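/- arXiv:2301.13589 — 2 statements merged into one kernel-verified Lean document; each statement's English description precedes it below -/
import Mathlib

section
/- Let v ∈ ℝⁿ, ε > 0, and 1 ≤ p, q ≤ ∞ with 1/p + 1/q = 1. Define κ_q(v) := inf over ω ∈ ℝ of ‖v - ω·𝟏‖_q, where 𝟏 is the all-ones vector. Then min over c ∈ ℝⁿ with ‖c‖_p ≤ ε and ⟨c, 𝟏⟩ = 0 of ⟨c, v⟩ equals -ε · κ_q(v). -/
/-
Hölder's inequality applied to `c` and `v - ω·𝟏` (using `∑ cᵢ = 0`) gives the lower bound. For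
attainment, the ℓ_q-distance from `v` to the constants is the norm of the class of `v` in the
quotient of ℓ_q by the line of constants; Hahn–Banach yields a functional of norm at most one on
that quotient attaining this norm at `[v]`. Pulled back to ℓ_q, it is `x ↦ ∑ cᵢ xᵢ` for some `c`
with `∑ cᵢ = 0`, and the norming vectors of ℓ_p–ℓ_q duality show `‖c‖_p ≤ 1`;
then `-ε c` attains the bound.
-/

open scoped ENNReal

/-- The ℓ_p norm of a finite real vector for `p : ℝ≥0∞` (sup norm when `p = ∞`). -/
noncomputable def lpnorm {n : ℕ} (p : ℝ≥0∞) (v : Fin n → ℝ) : ℝ :=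
  if p = ∞ then ⨆ i, |v i| else (∑ i, |v i| ^ p.toReal) ^ (1 / p.toReal)

open Finset

variable {n : ℕ}

lemma lpnorm_eq_norm_toLp {p : ℝ≥0∞} (hp : p ≠ 0) (v : Fin n → ℝ) :
    lpnorm p v = ‖WithLp.toLp p v‖ := by
  unfold lpnorm
  split_ifs with h
  · subst h
    simp [PiLp.norm_eq_ciSup]
  · simp [PiLp.norm_eq_sum (ENNReal.toReal_pos hp h)]

lemma lpnorm_nonneg (p : ℝ≥0∞) (v : Fin n → ℝ) : 0 ≤ lpnorm p v := by
  unfold lpnorm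
  split_ifs
  · exact Real.iSup_nonneg fun i => abs_nonneg _
  · positivity

lemma lpnorm_one (v : Fin n → ℝ) : lpnorm 1 v = ∑ i, |v i| := by
  simp [lpnorm]

lemma lpnorm_top (v : Fin n → ℝ) : lpnorm ∞ v = ⨆ i, |v i| := if_pos rfl

lemma abs_le_lpnorm_top (v : Fin n → ℝ) (i : Fin n) : |v i| ≤ lpnorm ∞ v := by
  rw [lpnorm_top]
  exact le_ciSup (Set.finite_range fun i => |v i|).bddAbove i

lemma abs_sign_le_one (x : ℝ) : |(SignType.sign x : ℝ)| ≤ 1 := by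
  rcases lt_trichotomy x 0 with hx | rfl | hx <;> simp [*]

lemma abs_sum_mul_le_lpnorm_one_mul_lpnorm_top (c x : Fin n → ℝ) :
    |∑ i, c i * x i| ≤ lpnorm 1 c * lpnorm ∞ x := by
  rw [lpnorm_one, sum_mul]
  refine (abs_sum_le_sum_abs _ _).trans (sum_le_sum fun i _ => ?_)
  rw [abs_mul]
  exact mul_le_mul_of_nonneg_left (abs_le_lpnorm_top x i) (abs_nonneg _)

lemma abs_sum_mul_le_lpnorm_mul_lpnorm {p q : ℝ≥0∞} [p.HolderConjugate q] (c x : Fin n → ℝ) :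
    |∑ i, c i * x i| ≤ lpnorm p c * lpnorm q x := by
  by_cases hq : q = ∞
  · obtain rfl : p = 1 := (ENNReal.HolderConjugate.eq_top_iff_eq_one q p).1 hq
    exact hq ▸ abs_sum_mul_le_lpnorm_one_mul_lpnorm_top c x
  by_cases hp : p = ∞
  · obtain rfl : q = 1 := (ENNReal.HolderConjugate.eq_top_iff_eq_one p q).1 hp
    simpa only [hp, mul_comm] using abs_sum_mul_le_lpnorm_one_mul_lpnorm_top x c
  have hpq := ENNReal.HolderConjugate.toReal_of_ne_top hp hq
  simp only [lpnorm, if_neg hp, if_neg hq]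
  refine (abs_sum_le_sum_abs _ _).trans ?_
  simpa [abs_mul] using Real.inner_le_Lp_mul_Lq univ (fun i => |c i|) (fun i => |x i|) hpq

lemma exists_lpnorm_top_le_one_sum_mul_eq (c : Fin n → ℝ) :
    ∃ x : Fin n → ℝ, lpnorm ∞ x ≤ 1 ∧ ∑ i, c i * x i = lpnorm 1 c := by
  refine ⟨fun i => SignType.sign (c i), ?_, ?_⟩
  · rw [lpnorm_top]
    exact Real.iSup_le (fun i => abs_sign_le_one (c i)) zero_le_one
  · simp only [lpnorm_one, mul_comm (c _), sign_mul_self]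

lemma exists_lpnorm_one_le_one_sum_mul_eq (c : Fin n → ℝ) :
    ∃ x : Fin n → ℝ, lpnorm 1 x ≤ 1 ∧ ∑ i, c i * x i = lpnorm ∞ c := by
  rcases isEmpty_or_nonempty (Fin n) with hn | hn
  · exact ⟨0, by simp [lpnorm_one], by simp [lpnorm_top]⟩
  obtain ⟨j, hj⟩ := Finite.exists_max fun i => |c i|
  have hc : lpnorm ∞ c = |c j| :=
    le_antisymm (by rw [lpnorm_top]; exact ciSup_le hj) (abs_le_lpnorm_top c j)
  refine ⟨Pi.single j (SignType.sign (c j) : ℝ), ?_, ?_⟩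
  · simpa [lpnorm_one, Pi.single_apply, apply_ite] using abs_sign_le_one (c j)
  · simp [hc, Pi.single_apply, mul_comm (c j), sign_mul_self]

lemma exists_lpnorm_le_one_sum_mul_eq_of_ne_top {p q : ℝ≥0∞} [p.HolderConjugate q]
    (hp : p ≠ ∞) (hq : q ≠ ∞) (c : Fin n → ℝ) :
    ∃ x : Fin n → ℝ, lpnorm q x ≤ 1 ∧ ∑ i, c i * x i = lpnorm p c := by
  have hpq := ENNReal.HolderConjugate.toReal_of_ne_top hp hq
  obtain ⟨⟨g, hg, hgc⟩, -⟩ := NNReal.isGreatest_Lp univ (fun i => ‖c i‖₊) hpq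
  refine ⟨fun i => SignType.sign (c i) * g i, ?_, ?_⟩
  · simp only [lpnorm, if_neg hq]
    refine Real.rpow_le_one (by positivity) ?_ (by simp [hpq.symm.nonneg])
    calc ∑ i, |(SignType.sign (c i) : ℝ) * g i| ^ q.toReal
        ≤ ∑ i, (g i : ℝ) ^ q.toReal := by
          gcongr with i
          rw [abs_mul, NNReal.abs_eq]
          exact mul_le_of_le_one_left (g i).2 (abs_sign_le_one _)
      _ ≤ 1 := by exact_mod_cast hg
  · simp only [lpnorm, if_neg hp]
    have := congrArg NNReal.toReal hgc
    push_cast at this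
    simpa [← mul_assoc, sign_mul_self] using this

lemma exists_lpnorm_le_one_sum_mul_eq {p q : ℝ≥0∞} [p.HolderConjugate q] (c : Fin n → ℝ) :
    ∃ x : Fin n → ℝ, lpnorm q x ≤ 1 ∧ ∑ i, c i * x i = lpnorm p c := by
  by_cases hq : q = ∞
  · obtain rfl : p = 1 := (ENNReal.HolderConjugate.eq_top_iff_eq_one q p).1 hq
    exact hq ▸ exists_lpnorm_top_le_one_sum_mul_eq c
  by_cases hp : p = ∞
  · obtain rfl : q = 1 := (ENNReal.HolderConjugate.eq_top_iff_eq_one p q).1 hp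
    exact hp ▸ exists_lpnorm_one_le_one_sum_mul_eq c
  exact exists_lpnorm_le_one_sum_mul_eq_of_ne_top hp hq c

lemma lpnorm_le_of_abs_sum_mul_le {p q : ℝ≥0∞} [p.HolderConjugate q]
    {c : Fin n → ℝ} {C : ℝ} (hC : 0 ≤ C) (h : ∀ x, |∑ i, c i * x i| ≤ C * lpnorm q x) :
    lpnorm p c ≤ C := by
  obtain ⟨x, hx, hcx⟩ := exists_lpnorm_le_one_sum_mul_eq (p := p) (q := q) c
  calc lpnorm p c = ∑ i, c i * x i := hcx.symm
    _ ≤ C * lpnorm q x := (le_abs_self _).trans (h x)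
    _ ≤ C := mul_le_of_le_one_right hC hx

lemma iInf_lpnorm_sub_const_le_norm_mkQ {q : ℝ≥0∞} [Fact (1 ≤ q)] (v : Fin n → ℝ) :
    ⨅ ω : ℝ, lpnorm q (fun i => v i - ω) ≤
      ‖(ℝ ∙ WithLp.toLp q (1 : Fin n → ℝ)).mkQ (WithLp.toLp q v)‖ := by
  have hq : q ≠ 0 := (zero_lt_one.trans_le Fact.out).ne'
  erw [QuotientAddGroup.norm_mk]
  rw [Submodule.coe_toAddSubgroup, Metric.le_infDist ⟨0, Submodule.zero_mem _⟩]
  rintro _ hy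
  obtain ⟨ω, rfl⟩ := Submodule.mem_span_singleton.1 hy
  refine (ciInf_le ⟨0, ?_⟩ ω).trans_eq ?_
  · rintro _ ⟨ω, rfl⟩
    exact lpnorm_nonneg _ _
  · rw [lpnorm_eq_norm_toLp hq, dist_eq_norm]
    congr 1
    ext i
    simp

lemma exists_sum_eq_zero_iInf_le_sum_mul (q : ℝ≥0∞) [Fact (1 ≤ q)] (v : Fin n → ℝ) :
    ∃ c : Fin n → ℝ, (∀ x, |∑ i, c i * x i| ≤ lpnorm q x) ∧ ∑ i, c i = 0 ∧
      ⨅ ω : ℝ, lpnorm q (fun i => v i - ω) ≤ ∑ i, c i * v i := by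
  set K : Submodule ℝ (PiLp q fun _ : Fin n => ℝ) := ℝ ∙ WithLp.toLp q 1
  obtain ⟨g, hg, hgv⟩ := exists_dual_vector'' ℝ (K.mkQ (WithLp.toLp q v))
  set f := (g : _ →ₗ[ℝ] ℝ) ∘ₗ K.mkQ ∘ₗ (WithLp.linearEquiv q ℝ (Fin n → ℝ)).symm.toLinearMap
  have hf : ∀ x, ∑ i, (f fun j => if i = j then 1 else 0) * x i = g (K.mkQ (WithLp.toLp q x)) :=
    fun x => by simp only [mul_comm, ← smul_eq_mul, ← LinearMap.pi_apply_eq_sum_univ f x]; rfl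
  refine ⟨fun i => f fun j => if i = j then 1 else 0, fun x => ?_, ?_, ?_⟩
  · rw [hf, ← Real.norm_eq_abs, lpnorm_eq_norm_toLp (zero_lt_one.trans_le Fact.out).ne']
    calc ‖g (K.mkQ (WithLp.toLp q x))‖ ≤ ‖g‖ * ‖K.mkQ (WithLp.toLp q x)‖ := g.le_opNorm _
      _ ≤ 1 * ‖WithLp.toLp q x‖ := by gcongr; exact Submodule.Quotient.norm_mk_le _ _
      _ = _ := one_mul _
  · simpa [(Submodule.Quotient.mk_eq_zero K).2 (Submodule.mem_span_singleton_self _)] using hf 1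
  · rw [hf, hgv]
    exact iInf_lpnorm_sub_const_le_norm_mkQ v

lemma neg_mul_iInf_lpnorm_sub_const_le_sum_mul {p q : ℝ≥0∞} [p.HolderConjugate q] {ε : ℝ}
    {c : Fin n → ℝ} (hc : lpnorm p c ≤ ε) (hsum : ∑ i, c i = 0) (v : Fin n → ℝ) :
    -ε * ⨅ ω : ℝ, lpnorm q (fun i => v i - ω) ≤ ∑ i, c i * v i := by
  rw [neg_mul, neg_le, Real.mul_iInf_of_nonneg ((lpnorm_nonneg p c).trans hc)]
  refine le_ciInf fun ω => ?_
  have hshift : ∑ i, c i * v i = ∑ i, c i * (v i - ω) := by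
    simp [mul_sub, sum_sub_distrib, ← sum_mul, hsum]
  calc -∑ i, c i * v i ≤ |∑ i, c i * (v i - ω)| := hshift ▸ neg_le_abs _
    _ ≤ lpnorm p c * lpnorm q (fun i => v i - ω) := abs_sum_mul_le_lpnorm_mul_lpnorm c _
    _ ≤ ε * lpnorm q (fun i => v i - ω) := by gcongr; exact lpnorm_nonneg _ _

theorem stmt1_general {n : ℕ} (v : Fin n → ℝ) (ε : ℝ) (hε : 0 < ε) (p q : ℝ≥0∞)
    (hpq : 1 / p + 1 / q = 1) :
    IsLeast {x : ℝ | ∃ c : Fin n → ℝ, lpnorm p c ≤ ε ∧ (∑ i, c i) = 0 ∧ x = ∑ i, c i * v i}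
      (-ε * ⨅ ω : ℝ, lpnorm q fun i => v i - ω) := by
  have : p.HolderConjugate q := ENNReal.holderConjugate_iff.2 (by simpa only [one_div] using hpq)
  have : Fact (1 ≤ q) := ⟨ENNReal.HolderConjugate.one_le q p⟩
  obtain ⟨c, hc, hsum, hcv⟩ := exists_sum_eq_zero_iInf_le_sum_mul q v
  have hnorm : lpnorm p (fun i => -ε * c i) ≤ ε := by
    refine lpnorm_le_of_abs_sum_mul_le (q := q) hε.le fun x => ?_
    simp_rw [mul_assoc, ← mul_sum, abs_mul, abs_neg, abs_of_pos hε]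
    exact mul_le_mul_of_nonneg_left (hc x) hε.le
  have hsum' : ∑ i, -ε * c i = 0 := by rw [← mul_sum, hsum, mul_zero]
  refine ⟨⟨fun i => -ε * c i, hnorm, hsum',
    le_antisymm (neg_mul_iInf_lpnorm_sub_const_le_sum_mul hnorm hsum' v) ?_⟩, ?_⟩
  · simp_rw [mul_assoc, ← mul_sum]
    exact mul_le_mul_of_nonpos_left hcv (neg_nonpos.2 hε.le)
  · rintro _ ⟨c, hc, hsum, rfl⟩
    exact neg_mul_iInf_lpnorm_sub_const_le_sum_mul hc hsum v

theorem stmt1 {n : ℕ} (v : Fin n → ℝ) (ε : ℝ) (hε : 0 < ε) (p q : ℝ≥0∞)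
    (hp : 1 ≤ p) (hq : 1 ≤ q) (hpq : 1 / p + 1 / q = 1) :
    IsLeast {x : ℝ | ∃ c : Fin n → ℝ, lpnorm p c ≤ ε ∧ (∑ i, c i) = 0 ∧ x = ∑ i, c i * v i}
      (-ε * ⨅ ω : ℝ, lpnorm q fun i => v i - ω) :=
  stmt1_general v ε hε p q hpq
end

section
/- Let v ∈ ℝⁿ, let P₀(·|s,a) ∈ Δⁿ, R₀(s,a) ∈ ℝ, and α, β ≥ 0, and 1 < p < ∞ with conjugate q. Then min over (r, p̂) with |r| ≤ α, p̂ ∈ ℝⁿ, ⟨p̂, 𝟏⟩ = 0, ‖p̂‖_p ≤ β of [R₀(s,a) + r + γ⟨P₀(·|s,a) + p̂, v⟩] equals R₀(s,a) + γ⟨P₀(·|s,a), v⟩ - α - γβ·κ_q(v), where κ_q(v) = min_{ω∈ℝ}‖v - ω·𝟏‖_q. -/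
/-!
The lower bound is Hölder's inequality: since `∑ ph = 0`, for every `ω` we have
`-⟪ph, v⟫ = -⟪ph, v - ω⟫ ≤ ‖ph‖_p ‖v - ω‖_q ≤ β ‖v - ω‖_q`.
For attainment, `ω ↦ ∑ |v i - ω| ^ q` is continuous and coercive, so it has a minimiser `ω₀`,
and the first-order condition there says that the Hölder-dual vector of `u = v - ω₀`,
`sign u · |u| ^ (q - 1)`, sums to zero. A suitable negative multiple of it is then an admissible
kernel perturbation achieving equality in Hölder's inequality against `u`.
-/

/-- The ℓ_p norm of a finite real vector, for a real exponent `p`. -/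
noncomputable def pnorm {n : ℕ} (p : ℝ) (v : Fin n → ℝ) : ℝ :=
  (∑ i, |v i| ^ p) ^ (1 / p)

open Finset Filter

section HolderDual

variable {ι : Type*}

/-- `sign u · |u| ^ (q - 1)`, the gradient of `(1/q) ∑ |u i| ^ q`: Hölder's inequality between the
`p`- and `q`-norms is an equality at this vector. -/
noncomputable def holderDual (q : ℝ) (u : ι → ℝ) : ι → ℝ := fun i => |u i| ^ (q - 2) * u i

lemma abs_rpow_sub_two_mul_self_mul_self {q : ℝ} (hq : q ≠ 0) (x : ℝ) :
    |x| ^ (q - 2) * x * x = |x| ^ q := by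
  rcases eq_or_ne x 0 with rfl | hx
  · simp [Real.zero_rpow hq]
  · rw [mul_assoc, ← abs_mul_abs_self, ← sq, ← Real.rpow_natCast,
      ← Real.rpow_add (abs_pos.mpr hx)]
    norm_num

lemma abs_holderDual_rpow {p q : ℝ} (hpq : p.HolderConjugate q) (u : ι → ℝ) (i : ι) :
    |holderDual q u i| ^ p = |u i| ^ q := by
  rcases eq_or_ne (u i) 0 with hu | hu
  · simp [holderDual, hu, Real.zero_rpow hpq.ne_zero, Real.zero_rpow hpq.symm.ne_zero]
  · rw [holderDual, abs_mul, abs_of_nonneg (by positivity),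
      ← Real.rpow_add_one (abs_ne_zero.mpr hu), ← Real.rpow_mul (abs_nonneg _),
      show q - 2 + 1 = q - 1 by ring, hpq.symm.sub_one_mul_conj]

variable [Fintype ι]

lemma exists_forall_sum_abs_sub_rpow_le (v : ι → ℝ) {q : ℝ} (hq : 0 ≤ q) :
    ∃ ω₀, ∀ ω, ∑ i, |v i - ω₀| ^ q ≤ ∑ i, |v i - ω| ^ q := by
  refine Continuous.exists_forall_le' (by fun_prop) 0 ?_
  set M := ∑ i, |v i|
  -- once `|ω| ≥ 2M`, each `|v i - ω|` dominates `|v i - 0|`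
  filter_upwards [tendsto_norm_cocompact_atTop.eventually_ge_atTop (2 * M)] with ω hω
  refine sum_le_sum fun i _ => Real.rpow_le_rpow (abs_nonneg _) ?_ hq
  have hvi : |v i| ≤ M :=
    single_le_sum (f := fun i => |v i|) (fun i _ => abs_nonneg _) (mem_univ i)
  have := abs_sub_abs_le_abs_sub ω (v i)
  rw [Real.norm_eq_abs] at hω
  rw [sub_zero, abs_sub_comm]
  linarith

lemma sum_holderDual_sub_eq_zero_of_forall_le {v : ι → ℝ} {q ω₀ : ℝ} (hq : 1 < q)
    (hmin : ∀ ω, ∑ i, |v i - ω₀| ^ q ≤ ∑ i, |v i - ω| ^ q) :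
    ∑ i, holderDual q (fun i => v i - ω₀) i = 0 := by
  have hderiv : HasDerivAt (fun ω => ∑ i, |v i - ω| ^ q)
      (∑ i, q * |v i - ω₀| ^ (q - 2) * (v i - ω₀) * (-1)) ω₀ :=
    HasDerivAt.fun_sum fun i _ =>
      (hasDerivAt_abs_rpow _ hq).comp ω₀ ((hasDerivAt_id ω₀).const_sub (v i))
  have hzero := IsLocalMin.hasDerivAt_eq_zero (Eventually.of_forall hmin) hderiv
  have : -q * ∑ i, holderDual q (fun i => v i - ω₀) i = 0 := by
    rw [← hzero, mul_sum]
    exact sum_congr rfl fun i _ => by simp only [holderDual]; ring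
  exact (mul_eq_zero.mp this).resolve_left (by linarith)

end HolderDual

section Pnorm

variable {n : ℕ}

lemma pnorm_nonneg (p : ℝ) (v : Fin n → ℝ) : 0 ≤ pnorm p v := by
  unfold pnorm; positivity

lemma pnorm_zero {p : ℝ} (hp : p ≠ 0) : pnorm p (0 : Fin n → ℝ) = 0 := by
  simp [pnorm, Real.zero_rpow hp, Real.zero_rpow (inv_ne_zero hp)]

lemma pnorm_smul {p : ℝ} (hp : 0 < p) (c : ℝ) (v : Fin n → ℝ) :
    pnorm p (c • v) = |c| * pnorm p v := by
  simp only [pnorm, Pi.smul_apply, smul_eq_mul, abs_mul,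
    Real.mul_rpow (abs_nonneg _) (abs_nonneg _), ← mul_sum]
  rw [Real.mul_rpow (by positivity) (by positivity), ← Real.rpow_mul (abs_nonneg _),
    mul_one_div_cancel hp.ne', Real.rpow_one]

lemma sum_mul_sub_const {w : Fin n → ℝ} (hw : ∑ i, w i = 0) (v : Fin n → ℝ) (ω : ℝ) :
    ∑ i, w i * (v i - ω) = ∑ i, w i * v i := by
  simp [mul_sub, sum_sub_distrib, ← sum_mul, hw]

lemma neg_sum_mul_le_pnorm_mul_pnorm_sub {p q : ℝ} (hpq : p.HolderConjugate q) {w : Fin n → ℝ}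
    (hw : ∑ i, w i = 0) (v : Fin n → ℝ) (ω : ℝ) :
    -∑ i, w i * v i ≤ pnorm p w * pnorm q (fun i => v i - ω) := by
  calc -∑ i, w i * v i = ∑ i, (-w i) * (v i - ω) := by
        simp only [neg_mul, sum_neg_distrib, sum_mul_sub_const hw]
    _ ≤ pnorm p (-w) * pnorm q (fun i => v i - ω) := Real.inner_le_Lp_mul_Lq _ _ _ hpq
    _ = pnorm p w * pnorm q (fun i => v i - ω) := by simp [pnorm]

lemma pnorm_holderDual {p q : ℝ} (hpq : p.HolderConjugate q) (u : Fin n → ℝ) :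
    pnorm p (holderDual q u) = (∑ i, |u i| ^ q) ^ (1 / p) := by
  simp only [pnorm, abs_holderDual_rpow hpq]

lemma sum_holderDual_mul_self {q : ℝ} (hq : q ≠ 0) (u : Fin n → ℝ) :
    ∑ i, holderDual q u i * u i = ∑ i, |u i| ^ q := by
  simp only [holderDual, abs_rpow_sub_two_mul_self_mul_self hq]

lemma exists_sum_eq_zero_pnorm_le_sum_mul_eq {p q β : ℝ} (hpq : p.HolderConjugate q)
    (hβ : 0 ≤ β) {u : Fin n → ℝ} (hu : ∑ i, holderDual q u i = 0) :
    ∃ w : Fin n → ℝ, ∑ i, w i = 0 ∧ pnorm p w ≤ β ∧ ∑ i, w i * u i = -(β * pnorm q u) := by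
  set K := ∑ i, |u i| ^ q
  have hnorm : pnorm q u = K ^ (1 / q) := rfl
  rcases (show 0 ≤ K by positivity).eq_or_lt with hK0 | hKpos
  · refine ⟨0, by simp, ?_, ?_⟩
    · rwa [pnorm_zero hpq.ne_zero]
    · rw [hnorm, ← hK0, Real.zero_rpow hpq.symm.one_div_ne_zero]
      simp
  have hsplit : K = K ^ (1 / p) * K ^ (1 / q) := by
    rw [← Real.rpow_add hKpos, hpq.one_div_add_one_div, div_one, Real.rpow_one]
  have hKp : 0 < K ^ (1 / p) := by positivity
  refine ⟨(-(β / K ^ (1 / p))) • holderDual q u, by simp [← mul_sum, hu], ?_, ?_⟩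
  · rw [pnorm_smul hpq.pos, pnorm_holderDual hpq, abs_neg, abs_of_nonneg (by positivity),
      div_mul_cancel₀ _ hKp.ne']
  · simp only [Pi.smul_apply, smul_eq_mul, mul_assoc, ← mul_sum,
      sum_holderDual_mul_self hpq.symm.ne_zero]
    rw [hnorm]
    calc -(β / K ^ (1 / p)) * K = -(β / K ^ (1 / p)) * (K ^ (1 / p) * K ^ (1 / q)) := by
          rw [← hsplit]
      _ = -(β * K ^ (1 / q)) := by field_simp

lemma iInf_pnorm_sub_eq {q ω₀ : ℝ} (hq : 0 < q) {v : Fin n → ℝ}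
    (hmin : ∀ ω, ∑ i, |v i - ω₀| ^ q ≤ ∑ i, |v i - ω| ^ q) :
    ⨅ ω : ℝ, pnorm q (fun i => v i - ω) = pnorm q (fun i => v i - ω₀) :=
  le_antisymm (ciInf_le ⟨0, by rintro _ ⟨ω, rfl⟩; exact pnorm_nonneg _ _⟩ ω₀)
    (le_ciInf fun ω => Real.rpow_le_rpow (by positivity) (hmin ω) (by positivity))

end Pnorm

theorem stmt15_general {n : ℕ} (v P0 : Fin n → ℝ)
    (R0 : ℝ) (γ α β : ℝ) (hγ : 0 ≤ γ) (hα : 0 ≤ α) (hβ : 0 ≤ β)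
    (p q : ℝ) (hp : 1 < p) (hpq : 1 / p + 1 / q = 1) :
    IsLeast {x : ℝ | ∃ r : ℝ, ∃ ph : Fin n → ℝ, |r| ≤ α ∧ (∑ i, ph i) = 0 ∧
        pnorm p ph ≤ β ∧ x = R0 + r + γ * ∑ i, (P0 i + ph i) * v i}
      (R0 + γ * (∑ i, P0 i * v i) - α - γ * β * ⨅ ω : ℝ, pnorm q fun i => v i - ω) := by
  have hpq' : p.HolderConjugate q :=
    Real.holderConjugate_iff.mpr ⟨hp, by simpa only [one_div] using hpq⟩
  obtain ⟨ω₀, hmin⟩ := exists_forall_sum_abs_sub_rpow_le v hpq'.symm.nonneg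
  rw [iInf_pnorm_sub_eq hpq'.symm.pos hmin]
  have hsplit (w : Fin n → ℝ) :
      ∑ i, (P0 i + w i) * v i = ∑ i, P0 i * v i + ∑ i, w i * v i := by
    simp only [add_mul, sum_add_distrib]
  constructor
  · obtain ⟨w, hw0, hwβ, hwv⟩ := exists_sum_eq_zero_pnorm_le_sum_mul_eq hpq' hβ
      (sum_holderDual_sub_eq_zero_of_forall_le hpq'.symm.lt hmin)
    refine ⟨-α, w, by rw [abs_neg, abs_of_nonneg hα], hw0, hwβ, ?_⟩
    rw [hsplit, ← sum_mul_sub_const hw0 v ω₀, hwv]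
    ring
  · rintro _ ⟨r, w, hr, hw0, hwβ, rfl⟩
    have hwv : -∑ i, w i * v i ≤ β * pnorm q (fun i => v i - ω₀) :=
      (neg_sum_mul_le_pnorm_mul_pnorm_sub hpq' hw0 v ω₀).trans
        (mul_le_mul_of_nonneg_right hwβ (pnorm_nonneg _ _))
    rw [hsplit]
    linarith [neg_le_of_abs_le hr, mul_le_mul_of_nonneg_left hwv hγ]

theorem stmt15 {n : ℕ} (v P0 : Fin n → ℝ) (hP0 : ∀ i, 0 ≤ P0 i) (hPs : ∑ i, P0 i = 1)
    (R0 : ℝ) (γ α β : ℝ) (hγ : 0 ≤ γ) (hα : 0 ≤ α) (hβ : 0 ≤ β)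
    (p q : ℝ) (hp : 1 < p) (hpq : 1 / p + 1 / q = 1) :
    IsLeast {x : ℝ | ∃ r : ℝ, ∃ ph : Fin n → ℝ, |r| ≤ α ∧ (∑ i, ph i) = 0 ∧
        pnorm p ph ≤ β ∧ x = R0 + r + γ * ∑ i, (P0 i + ph i) * v i}
      (R0 + γ * (∑ i, P0 i * v i) - α - γ * β * ⨅ ω : ℝ, pnorm q fun i => v i - ω) :=
  stmt15_general v P0 R0 γ α β hγ hα hβ p q hp hpq
end
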